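/- arXiv:1704.01268 — 2 statements merged into one kernel-verified Lean document; each statement's English description precedes it below -/
import Mathlib

section
/- Midpoint scheme conserves discrete symplectic structure: consider the real system on a Hilbert space arising from the midpoint discretization p^{n+1} = p^n − τ(Δ q^{n+1/2} + θ|x|² q^{n+1/2} + λ ∂_q Φ(p^{n+1/2}, q^{n+1/2})) + ΔW₂, q^{n+1} = q^n + τ(Δ p^{n+1/2} + θ|x|² p^{n+1/2} + λ ∂_p Φ(p^{n+1/2}, q^{n+1/2})) − ΔW₁, where Φ(p,q) = (p²+q²)^{σ+1}/(2σ+2) and v^{n+1/2} = (v^n+v^{n+1})/2. Then the differential two-form ∫₀¹ dp^{n+1} ∧ dq^{n+1} dx equals ∫₀¹ dp^{n} ∧ dq^{n} dx almost surely. -/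
open Finset

lemma symm_sum_aux {m : ℕ} (A : Matrix (Fin m) (Fin m) ℝ) (hA : A.IsSymm)
    (v w : Fin m → ℝ) :
    ∑ j, A.mulVec v j * w j = ∑ j, A.mulVec w j * v j := by
  simp only [Matrix.mulVec, dotProduct, Finset.sum_mul]
  rw [Finset.sum_comm]
  refine Finset.sum_congr rfl fun i _ => Finset.sum_congr rfl fun j _ => ?_
  rw [hA.apply i j]
  ring

/-- The midpoint discretization of the stochastic NLS (after spatial
discretization, with `A` a symmetric matrix playing the role of `Δ`,
`d` the diagonal potential `θ|x|²`, and `Φpp, Φpq, Φqq` the second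
derivatives of the nonlinearity `Φ` evaluated componentwise at the
midpoint) preserves the discrete symplectic two-form: for any two
solutions of the linearized (variational) midpoint equations, the value
of `∑ⱼ (dp ∧ dq)ⱼ` is the same at step `n+1` as at step `n`. -/
theorem midpoint_preserves_symplectic_form
    (m : ℕ) (A : Matrix (Fin m) (Fin m) ℝ) (hA : A.IsSymm)
    (d Φpp Φpq Φqq : Fin m → ℝ) (lam τ : ℝ)
    (dp0 dq0 dp1 dq1 dp0' dq0' dp1' dq1' : Fin m → ℝ)
    (h1 : ∀ j, dp1 j = dp0 j - τ *
      (A.mulVec (fun i => (dq0 i + dq1 i)/2) j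
        + d j * ((dq0 j + dq1 j)/2)
        + lam * (Φpq j * ((dp0 j + dp1 j)/2) + Φqq j * ((dq0 j + dq1 j)/2))))
    (h2 : ∀ j, dq1 j = dq0 j + τ *
      (A.mulVec (fun i => (dp0 i + dp1 i)/2) j
        + d j * ((dp0 j + dp1 j)/2)
        + lam * (Φpq j * ((dq0 j + dq1 j)/2) + Φpp j * ((dp0 j + dp1 j)/2))))
    (h1' : ∀ j, dp1' j = dp0' j - τ *
      (A.mulVec (fun i => (dq0' i + dq1' i)/2) j
        + d j * ((dq0' j + dq1' j)/2)
        + lam * (Φpq j * ((dp0' j + dp1' j)/2) + Φqq j * ((dq0' j + dq1' j)/2))))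
    (h2' : ∀ j, dq1' j = dq0' j + τ *
      (A.mulVec (fun i => (dp0' i + dp1' i)/2) j
        + d j * ((dp0' j + dp1' j)/2)
        + lam * (Φpq j * ((dq0' j + dq1' j)/2) + Φpp j * ((dp0' j + dp1' j)/2)))) :
    ∑ j, (dp1 j * dq1' j - dp1' j * dq1 j)
      = ∑ j, (dp0 j * dq0' j - dp0' j * dq0 j) := by
  -- midpoints
  set P : Fin m → ℝ := fun i => (dp0 i + dp1 i)/2 with hP
  set Q : Fin m → ℝ := fun i => (dq0 i + dq1 i)/2 with hQ
  set P' : Fin m → ℝ := fun i => (dp0' i + dp1' i)/2 with hP'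
  set Q' : Fin m → ℝ := fun i => (dq0' i + dq1' i)/2 with hQ'
  -- the pointwise change of the wedge
  have key : ∀ j, dp1 j * dq1' j - dp1' j * dq1 j
      = (dp0 j * dq0' j - dp0' j * dq0 j)
        + τ * (P j * A.mulVec P' j - A.mulVec Q j * Q' j
          - P' j * A.mulVec P j + A.mulVec Q' j * Q j) := by
    intro j
    have e1 := h1 j
    have e2 := h2 j
    have e1' := h1' j
    have e2' := h2' j
    simp only [hP, hQ, hP', hQ'] at *
    linear_combination ((dq0' j + dq1' j)/2) * e1
      + ((dp0 j + dp1 j)/2) * e2'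
      - ((dq0 j + dq1 j)/2) * e1'
      - ((dp0' j + dp1' j)/2) * e2
  calc ∑ j, (dp1 j * dq1' j - dp1' j * dq1 j)
      = ∑ j, ((dp0 j * dq0' j - dp0' j * dq0 j)
        + τ * (P j * A.mulVec P' j - A.mulVec Q j * Q' j
          - P' j * A.mulVec P j + A.mulVec Q' j * Q j)) :=
        Finset.sum_congr rfl fun j _ => key j
    _ = ∑ j, (dp0 j * dq0' j - dp0' j * dq0 j)
        + τ * ∑ j, (P j * A.mulVec P' j - A.mulVec Q j * Q' j
          - P' j * A.mulVec P j + A.mulVec Q' j * Q j) := by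
        rw [Finset.sum_add_distrib, ← Finset.mul_sum]
    _ = ∑ j, (dp0 j * dq0' j - dp0' j * dq0 j) := by
        have e : ∀ j : Fin m, P j * A.mulVec P' j - A.mulVec Q j * Q' j
            - P' j * A.mulVec P j + A.mulVec Q' j * Q j
            = (A.mulVec P' j * P j - A.mulVec P j * P' j)
              - (A.mulVec Q j * Q' j - A.mulVec Q' j * Q j) := fun j => by ring
        rw [Finset.sum_congr rfl fun j _ => e j]
        simp only [Finset.sum_sub_distrib]
        rw [symm_sum_aux A hA P' P, symm_sum_aux A hA Q Q']
        ring
end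

section
/- A priori L² bound for the implicit midpoint step: suppose ũ^{n+1} ∈ H¹₀(0,1) solves i(ũ^{n+1}−ũ^{n})/τ + Δũ^{n+1/2} + θ|x|²ũ^{n+1/2} + λ|ũ^{n+1/2}|^{2σ}ũ^{n+1/2} = ξ^n, where ũ^{n+1/2} = (ũ^n+ũ^{n+1})/2 and ξ^n ∈ L²(0,1). Then for 0 < τ < 2, ‖ũ^{n+1}‖²_{L²} ≤ ((2+τ)/(2−τ))‖ũ^{n}‖²_{L²} + (2τ/(2−τ))‖ξ^n‖²_{L²}. -/
open MeasureTheory intervalIntegral Complex ComplexConjugate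

/-!
Multiplying the midpoint equation by the conjugate of `ũⁿ⁺¹ᐟ²` and taking imaginary parts,
the time difference yields `(|ũⁿ⁺¹|² - |ũⁿ|²) / (2τ)` while every real multiple of `ũⁿ⁺¹ᐟ²`
(potential and nonlinearity) drops out; after integration by parts with Dirichlet data so does
the Laplacian. Hence `‖ũⁿ⁺¹‖² - ‖ũⁿ‖² = 2τ ∫ Im(ξⁿ · conj ũⁿ⁺¹ᐟ²)`, and Young's inequality
`Im(ξ conj m) ≤ |ξ|²/2 + |ũⁿ|²/4 + |ũⁿ⁺¹|²/4` closes the estimate for `τ < 2`.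
-/

theorem sq_norm_sub_sq_norm_eq_of_midpoint_eq {a b c D : ℂ} {r τ : ℝ} (hτ : τ ≠ 0)
    (h : I * ((b - a) / τ) + D + r * ((a + b) / 2) = c) :
    ‖b‖ ^ 2 - ‖a‖ ^ 2
      = 2 * τ * (c * conj ((a + b) / 2)).im - 2 * τ * (D * conj ((a + b) / 2)).im := by
  have hτ' : (τ : ℂ) ≠ 0 := by exact_mod_cast hτ
  have h' : I * (b - a) + τ * D + τ * r * ((a + b) / 2) = τ * c := by
    field_simp at h
    linear_combination h / 2
  have h_re := congrArg re h'
  have h_im := congrArg im h'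
  simp only [mul_re, mul_im, add_re, add_im, sub_re, sub_im, I_re, I_im, ofReal_re, ofReal_im,
    div_ofNat_re, div_ofNat_im] at h_re h_im
  simp only [mul_im, conj_re, conj_im, div_ofNat_re, div_ofNat_im, add_re, add_im,
    Complex.sq_norm, normSq_apply]
  linear_combination (a.re + b.re) * h_im - (a.im + b.im) * h_re

theorem im_mul_conj_midpoint_le (a b c : ℂ) :
    (c * conj ((a + b) / 2)).im ≤ ‖c‖ ^ 2 / 2 + ‖a‖ ^ 2 / 4 + ‖b‖ ^ 2 / 4 := by
  set m := (a + b) / 2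
  have h_im : (c * conj m).im ≤ ‖c‖ * ‖m‖ := by
    calc (c * conj m).im ≤ ‖c * conj m‖ := (le_abs_self _).trans (abs_im_le_norm _)
      _ = ‖c‖ * ‖m‖ := by rw [norm_mul, norm_conj]
  have h_m : ‖m‖ ≤ (‖a‖ + ‖b‖) / 2 := by
    rw [norm_div, RCLike.norm_ofNat]
    gcongr
    exact norm_add_le a b
  nlinarith [norm_nonneg c, norm_nonneg m, sq_nonneg (‖c‖ - ‖m‖), sq_nonneg (‖a‖ - ‖b‖)]

theorem integral_im_deriv_deriv_mul_conj_eq_zero {v : ℝ → ℂ} {a b : ℝ} (hv : ContDiff ℝ 2 v)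
    (ha : v a = 0) (hb : v b = 0) :
    ∫ x in a..b, (deriv (deriv v) x * conj (v x)).im = 0 := by
  have hv' : ContDiff ℝ 1 (deriv v) := hv.deriv' (n := 1)
  have hv_cont := hv.continuous
  have hv'_cont := hv'.continuous
  have hv''_cont : Continuous (deriv (deriv v)) := hv'.continuous_deriv le_rfl
  have h_parts : ∫ x in a..b, (deriv (deriv v) x * conj (v x) + deriv v x * conj (deriv v x))
      = deriv v b * conj (v b) - deriv v a * conj (v a) :=
    integral_deriv_mul_eq_sub
      (fun x _ => (hv'.differentiable one_ne_zero x).hasDerivAt)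
      (fun x _ => (hv.differentiable two_ne_zero x).hasDerivAt.star)
      (hv''_cont.intervalIntegrable a b)
      ((continuous_conj.comp hv'_cont).intervalIntegrable a b)
  have h_int : IntervalIntegrable
      (fun x => deriv (deriv v) x * conj (v x) + deriv v x * conj (deriv v x)) volume a b :=
    ((hv''_cont.mul (continuous_conj.comp hv_cont)).add
      (hv'_cont.mul (continuous_conj.comp hv'_cont))).intervalIntegrable a b
  -- `v' · conj v'` is real, so only `v'' · conj v` contributes to the imaginary part.
  have h_im : ∀ x, (deriv (deriv v) x * conj (v x)).im
      = RCLike.im (deriv (deriv v) x * conj (v x) + deriv v x * conj (deriv v x)) := by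
    intro x
    simp [mul_conj]
  simp_rw [h_im, intervalIntegral_im h_int, h_parts, ha, hb]
  simp

theorem midpoint_energy_identity {a b τ : ℝ} (hab : a ≤ b) (hτ : τ ≠ 0) {u0 u1 ξ : ℝ → ℂ}
    (V : ℝ → ℝ) (hu0 : ContDiff ℝ 2 u0) (hu1 : ContDiff ℝ 2 u1) (hξ : Continuous ξ)
    (hu0a : u0 a = 0) (hu0b : u0 b = 0) (hu1a : u1 a = 0) (hu1b : u1 b = 0)
    (heq : ∀ x ∈ Set.Ioo a b,
      I * ((u1 x - u0 x) / τ) + deriv (deriv (fun y => (u0 y + u1 y) / 2)) x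
        + V x * ((u0 x + u1 x) / 2) = ξ x) :
    (∫ x in a..b, ‖u1 x‖ ^ 2) - ∫ x in a..b, ‖u0 x‖ ^ 2
      = 2 * τ * ∫ x in a..b, (ξ x * conj ((u0 x + u1 x) / 2)).im := by
  set v : ℝ → ℂ := fun y => (u0 y + u1 y) / 2
  have hv : ContDiff ℝ 2 v := (hu0.add hu1).div_const 2
  have hv'' : Continuous (deriv (deriv v)) :=
    (hv.deriv' (n := 1)).continuous_deriv le_rfl
  have h_pointwise : Set.EqOn (fun x => ‖u1 x‖ ^ 2 - ‖u0 x‖ ^ 2)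
      (fun x => 2 * τ * (ξ x * conj (v x)).im - 2 * τ * (deriv (deriv v) x * conj (v x)).im)
      (Set.Ioo a b) := fun x hx =>
    sq_norm_sub_sq_norm_eq_of_midpoint_eq hτ (heq x hx)
  have h_laplacian := integral_im_deriv_deriv_mul_conj_eq_zero (a := a) (b := b) hv
    (by simp [v, hu0a, hu1a]) (by simp [v, hu0b, hu1b])
  have h_source : IntervalIntegrable (fun x => (ξ x * conj (v x)).im) volume a b :=
    (continuous_im.comp (hξ.mul (continuous_conj.comp hv.continuous))).intervalIntegrable a b
  have h_lap_int : IntervalIntegrable (fun x => (deriv (deriv v) x * conj (v x)).im) volume a b :=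
    (continuous_im.comp (hv''.mul (continuous_conj.comp hv.continuous))).intervalIntegrable a b
  have h_sq {f : ℝ → ℂ} (hf : Continuous f) :
      IntervalIntegrable (fun x => ‖f x‖ ^ 2) volume a b :=
    (hf.norm.pow 2).intervalIntegrable a b
  rw [← integral_sub (h_sq hu1.continuous) (h_sq hu0.continuous),
    integral_congr_Ioo_of_le hab h_pointwise,
    integral_sub (h_source.const_mul _) (h_lap_int.const_mul _),
    intervalIntegral.integral_const_mul, intervalIntegral.integral_const_mul, h_laplacian,
    mul_zero, sub_zero]

theorem integral_im_mul_conj_midpoint_le {a b : ℝ} (hab : a ≤ b) {u0 u1 ξ : ℝ → ℂ}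
    (hu0 : Continuous u0) (hu1 : Continuous u1) (hξ : Continuous ξ) :
    ∫ x in a..b, (ξ x * conj ((u0 x + u1 x) / 2)).im
      ≤ (∫ x in a..b, ‖ξ x‖ ^ 2) / 2 + (∫ x in a..b, ‖u0 x‖ ^ 2) / 4
        + (∫ x in a..b, ‖u1 x‖ ^ 2) / 4 := by
  have h_sq {f : ℝ → ℂ} (hf : Continuous f) (k : ℝ) :
      IntervalIntegrable (fun x => ‖f x‖ ^ 2 / k) volume a b :=
    ((hf.norm.pow 2).div_const k).intervalIntegrable a b
  have h_lhs : IntervalIntegrable (fun x => (ξ x * conj ((u0 x + u1 x) / 2)).im) volume a b :=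
    (continuous_im.comp (hξ.mul (continuous_conj.comp
      ((hu0.add hu1).div_const 2)))).intervalIntegrable a b
  calc ∫ x in a..b, (ξ x * conj ((u0 x + u1 x) / 2)).im
      ≤ ∫ x in a..b, (‖ξ x‖ ^ 2 / 2 + ‖u0 x‖ ^ 2 / 4 + ‖u1 x‖ ^ 2 / 4) :=
        integral_mono_on hab h_lhs (((h_sq hξ 2).add (h_sq hu0 4)).add (h_sq hu1 4))
          fun x _ => im_mul_conj_midpoint_le (u0 x) (u1 x) (ξ x)
    _ = _ := by
        rw [integral_add ((h_sq hξ 2).add (h_sq hu0 4)) (h_sq hu1 4),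
          integral_add (h_sq hξ 2) (h_sq hu0 4), intervalIntegral.integral_div,
          intervalIntegral.integral_div, intervalIntegral.integral_div]

theorem midpoint_L2_apriori_general
    (θ lam σ τ : ℝ) (hτ0 : 0 < τ) (hτ2 : τ < 2)
    (u0 u1 ξ : ℝ → ℂ)
    (hu0 : ContDiff ℝ 2 u0) (hu1 : ContDiff ℝ 2 u1) (hξ : Continuous ξ)
    (hbc00 : u0 0 = 0) (hbc01 : u0 1 = 0) (hbc10 : u1 0 = 0) (hbc11 : u1 1 = 0)
    (heq : ∀ x ∈ Set.Ioo (0:ℝ) 1,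
      Complex.I * ((u1 x - u0 x) / (τ : ℂ))
        + deriv (deriv (fun y => (u0 y + u1 y)/2)) x
        + (θ : ℂ) * (x : ℂ) ^ 2 * ((u0 x + u1 x)/2)
        + (lam : ℂ) * ((‖(u0 x + u1 x)/2‖ ^ (2*σ) : ℝ) : ℂ) * ((u0 x + u1 x)/2)
      = ξ x) :
    (∫ x in (0:ℝ)..1, ‖u1 x‖ ^ 2)
      ≤ ((2 + τ)/(2 - τ)) * (∫ x in (0:ℝ)..1, ‖u0 x‖ ^ 2)
        + (2*τ/(2 - τ)) * (∫ x in (0:ℝ)..1, ‖ξ x‖ ^ 2) := by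
  have h_energy := midpoint_energy_identity zero_le_one hτ0.ne'
    (fun x => θ * x ^ 2 + lam * ‖(u0 x + u1 x) / 2‖ ^ (2 * σ)) hu0 hu1 hξ
    hbc00 hbc01 hbc10 hbc11 fun x hx => by
      push_cast
      linear_combination heq x hx
  have h_young := integral_im_mul_conj_midpoint_le zero_le_one hu0.continuous hu1.continuous hξ
  rw [div_mul_eq_mul_div, div_mul_eq_mul_div, ← add_div, le_div_iff₀ (by linarith)]
  nlinarith [mul_le_mul_of_nonneg_left h_young (by positivity : (0:ℝ) ≤ 2 * τ)]

/-- A priori `L²` bound for one implicit midpoint step of the stochastic NLS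
with quadratic potential: if `ũⁿ⁺¹` solves the midpoint equation with datum
`ũⁿ` and source `ξⁿ`, then for `0 < τ < 2`,
`‖ũⁿ⁺¹‖² ≤ (2+τ)/(2-τ) ‖ũⁿ‖² + 2τ/(2-τ) ‖ξⁿ‖²`. -/
theorem midpoint_L2_apriori
    (θ lam σ τ : ℝ) (hσ : 0 < σ) (hτ0 : 0 < τ) (hτ2 : τ < 2)
    (u0 u1 ξ : ℝ → ℂ)
    (hu0 : ContDiff ℝ 2 u0) (hu1 : ContDiff ℝ 2 u1) (hξ : Continuous ξ)
    (hbc00 : u0 0 = 0) (hbc01 : u0 1 = 0) (hbc10 : u1 0 = 0) (hbc11 : u1 1 = 0)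
    (heq : ∀ x ∈ Set.Ioo (0:ℝ) 1,
      Complex.I * ((u1 x - u0 x) / (τ : ℂ))
        + deriv (deriv (fun y => (u0 y + u1 y)/2)) x
        + (θ : ℂ) * (x : ℂ) ^ 2 * ((u0 x + u1 x)/2)
        + (lam : ℂ) * ((‖(u0 x + u1 x)/2‖ ^ (2*σ) : ℝ) : ℂ) * ((u0 x + u1 x)/2)
      = ξ x) :
    (∫ x in (0:ℝ)..1, ‖u1 x‖ ^ 2)
      ≤ ((2 + τ)/(2 - τ)) * (∫ x in (0:ℝ)..1, ‖u0 x‖ ^ 2)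
        + (2*τ/(2 - τ)) * (∫ x in (0:ℝ)..1, ‖ξ x‖ ^ 2) :=
  midpoint_L2_apriori_general θ lam σ τ hτ0 hτ2 u0 u1 ξ hu0 hu1 hξ hbc00 hbc01 hbc10 hbc11 heq
end
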